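/- arXiv:2307.03447 — 8 statements merged into one kernel-verified Lean document; each statement's English description precedes it below -/
import Mathlib

section
/- Let E be a real vector space and f : E → EReal with f x ≠ ⊥ for all x ∈ E and f 0 ≠ ⊤. Then f is star-shaped (with respect to its value at 0) if and only if for every x ∈ E and every real λ ≥ 1 one has f (λ • x) ≥ (λ : EReal) * f x + ((1 - λ : ℝ) : EReal) * f 0. -/
/-! The substitution `(x, λ) ↦ (λ • x, λ⁻¹)` exchanges the two inequalities, because multiplying
by `λ > 0` and shifting by the real number `f 0` are order automorphisms of `EReal`. -/

theorem EReal.le_mul_add_iff_inv_mul_add_le {t : ℝ} (ht : 0 < t) (c : ℝ) (a b : EReal) :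
    b ≤ t * a + ((1 - t : ℝ) : EReal) * c ↔
      (t⁻¹ : ℝ) * b + ((1 - t⁻¹ : ℝ) : EReal) * c ≤ a := by
  have ht' : 0 < t⁻¹ := inv_pos.mpr ht
  rw [← EReal.coe_mul, ← EReal.coe_mul]
  induction a using EReal.rec <;> induction b using EReal.rec
  case coe.coe a b =>
    norm_cast
    have h : t⁻¹ * (t * a + (1 - t) * c) = a - (1 - t⁻¹) * c := by field_simp; ring
    rw [← mul_le_mul_iff_right₀ ht', h]
    exact _root_.le_sub_iff_add_le
  all_goals simp [EReal.mul_top_of_pos, EReal.mul_bot_of_pos, ht, ht', ← EReal.coe_mul,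
    ← EReal.coe_add]

/-- star-shapedness is equivalent to the reverse inequality for scalars `λ ≥ 1`. -/
theorem stmt_1 {E : Type*} [AddCommGroup E] [Module ℝ E]
    (f : E → EReal) (hbot : ∀ x : E, f x ≠ ⊥) (htop : f 0 ≠ ⊤) :
    (∀ x : E, ∀ lam : ℝ, 0 ≤ lam → lam ≤ 1 →
        f (lam • x) ≤ (lam : EReal) * f x + ((1 - lam : ℝ) : EReal) * f 0) ↔
      (∀ x : E, ∀ lam : ℝ, 1 ≤ lam →
        (lam : EReal) * f x + ((1 - lam : ℝ) : EReal) * f 0 ≤ f (lam • x)) := by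
  obtain ⟨c, hc⟩ : ∃ c : ℝ, f 0 = c := ⟨(f 0).toReal, (EReal.coe_toReal htop (hbot 0)).symm⟩
  rw [hc]
  constructor
  · intro hstar x lam hlam
    have hpos : 0 < lam := zero_lt_one.trans_le hlam
    have h := hstar (lam • x) lam⁻¹ (inv_nonneg.mpr hpos.le) (inv_le_one_of_one_le₀ hlam)
    rwa [inv_smul_smul₀ hpos.ne', EReal.le_mul_add_iff_inv_mul_add_le (inv_pos.mpr hpos),
      inv_inv] at h
  · intro hrev x lam hlam0 hlam1
    rcases hlam0.eq_or_lt with rfl | hpos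
    · simp [hc]
    have h := hrev (lam • x) lam⁻¹ ((one_le_inv₀ hpos).mpr hlam1)
    rwa [inv_smul_smul₀ hpos.ne', ← EReal.le_mul_add_iff_inv_mul_add_le hpos] at h
end

section
/- Let E be a Hausdorff topological real vector space (a topological additive group with continuous scalar multiplication by ℝ). Let f : E → EReal satisfy f x ≠ ⊥ for all x ∈ E and f 0 ≠ ⊤, and let Z ∈ E with f Z ≠ ⊤. Then the functional f_Z : E → EReal satisfies: (a) f_Z is proper, i.e. f_Z x ≠ ⊥ for all x and f_Z is not identically ⊤; (b) f_Z is convex; (c) f_Z is lower semicontinuous on E. -/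
/-
On the segment `{α • Z | α ∈ [0,1]}` the functional `f_Z` is the real affine function
`α ↦ α f(Z) + (1 - α) f(0)`, and off the segment it is `⊤`. Real values give properness;
affinity gives convexity when both points lie on the segment, and otherwise the right-hand
side is `⊤`. Lower semicontinuity holds for any infimum of a lower semicontinuous function
over the fibres of a continuous map on a compact set into a Hausdorff space (here `α ↦ α • Z`
on `[0,1]`): below a level `y'`, the points of value `≤ y'` avoid a neighbourhood, namely the
complement of the compact, hence closed, image of the sublevel set `{g ≤ y'}`.
-/

/-- The functional `f_Z` associated to `f : E → EReal` and `Z : E`: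
`f_Z X = sInf { α * f Z + (1-α) * f 0 | α ∈ [0,1], X = α • Z }` (in `EReal`). -/
noncomputable def sliceFun {E : Type*} [AddCommGroup E] [Module ℝ E]
    (f : E → EReal) (Z : E) (X : E) : EReal :=
  sInf {v : EReal | ∃ α : ℝ, 0 ≤ α ∧ α ≤ 1 ∧ X = α • Z ∧
    v = (α : EReal) * f Z + ((1 - α : ℝ) : EReal) * f 0}

open Set

theorem lowerSemicontinuous_sInf_image_fiber {K E β : Type*} [TopologicalSpace K]
    [TopologicalSpace E] [T2Space E] [CompleteLinearOrder β] [DenselyOrdered β]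
    {s : Set K} (hs : IsCompact s) {g : K → β} (hg : LowerSemicontinuousOn g s)
    {φ : K → E} (hφ : ContinuousOn φ s) :
    LowerSemicontinuous fun x => sInf (g '' {k ∈ s | φ k = x}) := by
  intro x y hy
  obtain ⟨y', hyy', hy'x⟩ := exists_between hy
  obtain ⟨v, hv, hsv⟩ := lowerSemicontinuousOn_iff_preimage_Iic.1 hg y'
  have hT : IsCompact (s ∩ g ⁻¹' Iic y') := hsv ▸ hs.inter_right hv
  have hxT : x ∉ φ '' (s ∩ g ⁻¹' Iic y') := by
    rintro ⟨k, ⟨hks, hky'⟩, rfl⟩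
    have hle : sInf (g '' {k' ∈ s | φ k' = φ k}) ≤ g k := sInf_le ⟨k, ⟨hks, rfl⟩, rfl⟩
    exact (hle.trans hky').not_gt hy'x
  filter_upwards [(hT.image_of_continuousOn (hφ.mono inter_subset_left)).isClosed.isOpen_compl
    |>.mem_nhds hxT] with z hz
  refine hyy'.trans_le (le_sInf ?_)
  rintro _ ⟨k, ⟨hks, rfl⟩, rfl⟩
  by_contra! hkz
  exact hz ⟨k, ⟨hks, hkz.le⟩, rfl⟩

theorem EReal.coe_mul_ne_bot {t : ℝ} (ht : 0 ≤ t) {x : EReal} (hx : x ≠ ⊥) : (t : EReal) * x ≠ ⊥ :=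
  (EReal.mul_ne_bot _ _).2 ⟨.inl (EReal.coe_ne_bot t), .inr hx, .inl (EReal.coe_ne_top t),
    .inl (EReal.coe_nonneg.2 ht)⟩

section sliceFun

variable {E : Type*} [AddCommGroup E] [Module ℝ E] {f : E → EReal} {Z : E} {a b : ℝ}

theorem sliceFun_eq_top {X : E} (hX : X ∉ (· • Z) '' Icc (0 : ℝ) 1) : sliceFun f Z X = ⊤ :=
  sInf_eq_top.2 fun _ ⟨α, h0, h1, hXα, _⟩ => absurd ⟨α, ⟨h0, h1⟩, hXα.symm⟩ hX

theorem sliceFun_eq_sInf_image (hfZ : f Z = a) (hf0 : f 0 = b) (X : E) :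
    sliceFun f Z X =
      sInf ((fun α : ℝ => ((α * a + (1 - α) * b : ℝ) : EReal)) '' {α ∈ Icc 0 1 | α • Z = X}) := by
  rw [sliceFun, hfZ, hf0]
  congr 1
  ext v
  simp only [mem_ofPred_eq, mem_image, mem_Icc, EReal.coe_add, EReal.coe_mul]
  constructor
  · rintro ⟨α, h0, h1, rfl, rfl⟩
    exact ⟨α, ⟨⟨h0, h1⟩, rfl⟩, rfl⟩
  · rintro ⟨α, ⟨⟨h0, h1⟩, rfl⟩, rfl⟩
    exact ⟨α, h0, h1, rfl, rfl⟩

-- When `Z = 0` the parameter `α` is not determined by `α • Z`, but then `f Z = f 0`.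
theorem mul_add_one_sub_mul_eq_of_smul_eq (hfZ : f Z = a) (hf0 : f 0 = b) {α β : ℝ} (h : β • Z = α • Z) :
    β * a + (1 - β) * b = α * a + (1 - α) * b := by
  rcases smul_eq_zero.1 (show (β - α) • Z = 0 by rw [sub_smul, h, sub_self]) with hβα | rfl
  · rw [sub_eq_zero.1 hβα]
  · obtain rfl : a = b := EReal.coe_injective (hfZ.symm.trans hf0)
    ring

theorem sliceFun_smul (hfZ : f Z = a) (hf0 : f 0 = b) {α : ℝ} (hα : α ∈ Icc (0 : ℝ) 1) :
    sliceFun f Z (α • Z) = ((α * a + (1 - α) * b : ℝ) : EReal) := by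
  have hconst : EqOn (fun β : ℝ => ((β * a + (1 - β) * b : ℝ) : EReal))
      (fun _ => ((α * a + (1 - α) * b : ℝ) : EReal)) {β ∈ Icc 0 1 | β • Z = α • Z} :=
    fun β hβ => congrArg _ (mul_add_one_sub_mul_eq_of_smul_eq hfZ hf0 hβ.2)
  have hfiber : {β ∈ Icc (0 : ℝ) 1 | β • Z = α • Z}.Nonempty := ⟨α, hα, rfl⟩
  rw [sliceFun_eq_sInf_image hfZ hf0, hconst.image_eq, hfiber.image_const, sInf_singleton]

theorem sliceFun_self (hfZ : f Z = a) (hf0 : f 0 = b) : sliceFun f Z Z = a := by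
  simpa using sliceFun_smul hfZ hf0 (right_mem_Icc.2 zero_le_one)

theorem sliceFun_ne_bot (hfZ : f Z = a) (hf0 : f 0 = b) (X : E) : sliceFun f Z X ≠ ⊥ := by
  by_cases hX : X ∈ (· • Z) '' Icc (0 : ℝ) 1
  · obtain ⟨α, hα, rfl⟩ := hX
    rw [sliceFun_smul hfZ hf0 hα]
    exact EReal.coe_ne_bot _
  · rw [sliceFun_eq_top hX]
    exact top_ne_bot

theorem sliceFun_le_convex_combination (hfZ : f Z = a) (hf0 : f 0 = b) {X Y : E} {lam : ℝ}
    (h0 : 0 ≤ lam) (h1 : lam ≤ 1) :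
    sliceFun f Z (lam • X + (1 - lam) • Y) ≤
      (lam : EReal) * sliceFun f Z X + ((1 - lam : ℝ) : EReal) * sliceFun f Z Y := by
  rcases h0.eq_or_lt with rfl | h0
  · simp
  rcases h1.eq_or_lt with rfl | h1
  · simp
  have h1' : 0 < 1 - lam := sub_pos.2 h1
  by_cases hX : X ∈ (· • Z) '' Icc (0 : ℝ) 1
  swap
  · rw [sliceFun_eq_top hX, EReal.coe_mul_top_of_pos h0,
      EReal.top_add_of_ne_bot (EReal.coe_mul_ne_bot h1'.le (sliceFun_ne_bot hfZ hf0 Y))]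
    exact le_top
  by_cases hY : Y ∈ (· • Z) '' Icc (0 : ℝ) 1
  swap
  · rw [sliceFun_eq_top hY, EReal.coe_mul_top_of_pos h1',
      EReal.add_top_of_ne_bot (EReal.coe_mul_ne_bot h0.le (sliceFun_ne_bot hfZ hf0 X))]
    exact le_top
  obtain ⟨α, ⟨hα0, hα1⟩, rfl⟩ := hX
  obtain ⟨β, ⟨hβ0, hβ1⟩, rfl⟩ := hY
  have hγ : lam * α + (1 - lam) * β ∈ Icc (0 : ℝ) 1 := ⟨by positivity, by nlinarith⟩
  rw [smul_smul, smul_smul, ← add_smul, sliceFun_smul hfZ hf0 hγ,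
    sliceFun_smul hfZ hf0 ⟨hα0, hα1⟩, sliceFun_smul hfZ hf0 ⟨hβ0, hβ1⟩,
    ← EReal.coe_mul, ← EReal.coe_mul, ← EReal.coe_add]
  exact le_of_eq (congrArg _ (by ring))

theorem lowerSemicontinuous_sliceFun [TopologicalSpace E] [ContinuousSMul ℝ E] [T2Space E]
    (hfZ : f Z = a) (hf0 : f 0 = b) : LowerSemicontinuous (sliceFun f Z) := by
  rw [funext (sliceFun_eq_sInf_image hfZ hf0)]
  have hcont : Continuous fun α : ℝ => ((α * a + (1 - α) * b : ℝ) : EReal) :=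
    continuous_coe_real_ereal.comp (by fun_prop)
  exact lowerSemicontinuous_sInf_image_fiber isCompact_Icc
    (hcont.lowerSemicontinuous.lowerSemicontinuousOn _)
    (continuous_id.smul continuous_const).continuousOn

end sliceFun

theorem stmt_2_general {E : Type*} [AddCommGroup E] [Module ℝ E] [TopologicalSpace E]
    [ContinuousSMul ℝ E] [T2Space E]
    (f : E → EReal) (hbot : ∀ x : E, f x ≠ ⊥) (htop : f 0 ≠ ⊤)
    (Z : E) (hZ : f Z ≠ ⊤) :
    ((∀ x : E, sliceFun f Z x ≠ ⊥) ∧ ¬ (∀ x : E, sliceFun f Z x = ⊤)) ∧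
      (∀ X Y : E, ∀ lam : ℝ, 0 ≤ lam → lam ≤ 1 →
        sliceFun f Z (lam • X + (1 - lam) • Y) ≤
          (lam : EReal) * sliceFun f Z X + ((1 - lam : ℝ) : EReal) * sliceFun f Z Y) ∧
      LowerSemicontinuous (sliceFun f Z) := by
  have hfZ : f Z = (f Z).toReal := (EReal.coe_toReal hZ (hbot Z)).symm
  have hf0 : f 0 = (f 0).toReal := (EReal.coe_toReal htop (hbot 0)).symm
  refine ⟨⟨sliceFun_ne_bot hfZ hf0, fun hall => ?_⟩,
    fun _ _ _ h0 h1 => sliceFun_le_convex_combination hfZ hf0 h0 h1,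
    lowerSemicontinuous_sliceFun hfZ hf0⟩
  exact EReal.coe_ne_top _ ((sliceFun_self hfZ hf0).symm.trans (hall Z))

/-- `f_Z` is proper, convex and lower semicontinuous. -/
theorem stmt_2 {E : Type*} [AddCommGroup E] [Module ℝ E] [TopologicalSpace E]
    [IsTopologicalAddGroup E] [ContinuousSMul ℝ E] [T2Space E]
    (f : E → EReal) (hbot : ∀ x : E, f x ≠ ⊥) (htop : f 0 ≠ ⊤)
    (Z : E) (hZ : f Z ≠ ⊤) :
    ((∀ x : E, sliceFun f Z x ≠ ⊥) ∧ ¬ (∀ x : E, sliceFun f Z x = ⊤)) ∧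
      (∀ X Y : E, ∀ lam : ℝ, 0 ≤ lam → lam ≤ 1 →
        sliceFun f Z (lam • X + (1 - lam) • Y) ≤
          (lam : EReal) * sliceFun f Z X + ((1 - lam : ℝ) : EReal) * sliceFun f Z Y) ∧
      LowerSemicontinuous (sliceFun f Z) :=
  stmt_2_general f hbot htop Z hZ
end

section
/- Let E be a real vector space and let f : E → EReal be star-shaped (with respect to its value at 0), with f x ≠ ⊥ for all x ∈ E and f 0 ≠ ⊤. Then: (a) for every X ∈ E and every Z ∈ E with f Z ≠ ⊤, f X ≤ f_Z X; (b) for every X ∈ E with f X ≠ ⊤, f_X X = f X; consequently (c) for every X ∈ E, f X = ⨅_{Z : f Z ≠ ⊤} f_Z X, and this infimum is attained (there is a Z with f Z ≠ ⊤ and f X = f_Z X). -/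
/-!
Each `f_Z X` is an infimum of the right-hand sides of the star-shapedness inequality along the
segment `[0, Z]`, so `f ≤ f_Z`; taking `α = 1` gives `f_X X ≤ f X`. Hence `f = f_X` wherever `f`
is finite, and where `f X = ⊤` the point `Z = 0` works: since `f 0 ≠ ⊤` we have `X ≠ 0`, which is
not on the segment `[0, 0]`, so `f_0 X = sInf ∅ = ⊤`.
-/

def IsStarShaped {E : Type*} [AddCommGroup E] [Module ℝ E] (f : E → EReal) : Prop :=
  ∀ x : E, ∀ lam : ℝ, 0 ≤ lam → lam ≤ 1 →
    f (lam • x) ≤ (lam : EReal) * f x + ((1 - lam : ℝ) : EReal) * f 0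

section SliceFun

variable {E : Type*} [AddCommGroup E] [Module ℝ E] {f : E → EReal}

theorem IsStarShaped.le_sliceFun (hf : IsStarShaped f) (X Z : E) : f X ≤ sliceFun f Z X := by
  refine le_sInf ?_
  rintro v ⟨α, hα₀, hα₁, rfl, rfl⟩
  exact hf Z α hα₀ hα₁

theorem sliceFun_self_le (f : E → EReal) (X : E) : sliceFun f X X ≤ f X :=
  sInf_le ⟨1, zero_le_one, le_rfl, (one_smul ℝ X).symm, by norm_num⟩

theorem IsStarShaped.sliceFun_self (hf : IsStarShaped f) (X : E) : sliceFun f X X = f X :=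
  (sliceFun_self_le f X).antisymm (hf.le_sliceFun X X)

theorem sliceFun_zero_of_ne_zero (f : E → EReal) {X : E} (hX : X ≠ 0) : sliceFun f 0 X = ⊤ := by
  refine sInf_eq_top.mpr ?_
  rintro v ⟨α, -, -, hXα, -⟩
  exact absurd (hXα.trans (smul_zero α)) hX

theorem exists_sliceFun_eq (hf : IsStarShaped f) (h0 : f 0 ≠ ⊤) (X : E) :
    ∃ Z : E, f Z ≠ ⊤ ∧ f X = sliceFun f Z X := by
  by_cases hX : f X = ⊤
  · have hX0 : X ≠ 0 := by rintro rfl; exact h0 hX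
    exact ⟨0, h0, by rw [hX, sliceFun_zero_of_ne_zero f hX0]⟩
  · exact ⟨X, hX, (hf.sliceFun_self X).symm⟩

end SliceFun

theorem stmt_3_general {E : Type*} [AddCommGroup E] [Module ℝ E]
    (f : E → EReal) (htop : f 0 ≠ ⊤)
    (hss : ∀ x : E, ∀ lam : ℝ, 0 ≤ lam → lam ≤ 1 →
      f (lam • x) ≤ (lam : EReal) * f x + ((1 - lam : ℝ) : EReal) * f 0) :
    (∀ X Z : E, f Z ≠ ⊤ → f X ≤ sliceFun f Z X) ∧
      (∀ X : E, f X ≠ ⊤ → sliceFun f X X = f X) ∧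
      (∀ X : E,
        f X = (⨅ Z : {Z : E // f Z ≠ ⊤}, sliceFun f Z.1 X) ∧
          ∃ Z : E, f Z ≠ ⊤ ∧ f X = sliceFun f Z X) := by
  have hf : IsStarShaped f := hss
  refine ⟨fun X Z _ => hf.le_sliceFun X Z, fun X _ => hf.sliceFun_self X, fun X => ?_⟩
  obtain ⟨Z, hZ, hfZ⟩ := exists_sliceFun_eq hf htop X
  refine ⟨le_antisymm ?_ ?_, Z, hZ, hfZ⟩
  · exact le_iInf fun W => hf.le_sliceFun X W.1
  · exact iInf_le_of_le ⟨Z, hZ⟩ hfZ.ge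

/-- a star-shaped functional is the attained pointwise minimum of
the family `f_Z`, `Z ∈ dom f`. -/
theorem stmt_3 {E : Type*} [AddCommGroup E] [Module ℝ E]
    (f : E → EReal) (hbot : ∀ x : E, f x ≠ ⊥) (htop : f 0 ≠ ⊤)
    (hss : ∀ x : E, ∀ lam : ℝ, 0 ≤ lam → lam ≤ 1 →
      f (lam • x) ≤ (lam : EReal) * f x + ((1 - lam : ℝ) : EReal) * f 0) :
    (∀ X Z : E, f Z ≠ ⊤ → f X ≤ sliceFun f Z X) ∧
      (∀ X : E, f X ≠ ⊤ → sliceFun f X X = f X) ∧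
      (∀ X : E,
        f X = (⨅ Z : {Z : E // f Z ≠ ⊤}, sliceFun f Z.1 X) ∧
          ∃ Z : E, f Z ≠ ⊤ ∧ f X = sliceFun f Z X) :=
  stmt_3_general f htop hss
end

section
/- Let E be an ordered real vector space: a partially ordered additive commutative group with an ℝ-module structure such that x ≤ y implies x + z ≤ y + z, and such that 0 ≤ λ and x ≤ y imply λ • x ≤ λ • y. Let f : E → EReal be monotone (X ≤ Y implies f X ≤ f Y), star-shaped (with respect to its value at 0), with f x ≠ ⊥ for all x ∈ E and f 0 ≠ ⊤. Then there exists a family (g_Z) of functions g_Z : E → EReal, indexed by the Z ∈ E with f Z ≠ ⊤, such that: each g_Z is monotone, convex, satisfies g_Z x ≠ ⊥ for all x, g_Z 0 = f 0, and f X ≤ g_Z X for all X ∈ E; and for every X ∈ E, f X = ⨅_{Z : f Z ≠ ⊤} g_Z X, this infimum being attained. -/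
/-! For `Z` in the proper domain of `f`, put
`g_Z X = inf {λ f Z + (1 - λ) f 0 : λ ∈ [0, 1], X ≤ λ • Z}`
(so `g_Z X = ⊤` when no `λ` is feasible). Monotonicity and star-shapedness give
`f X ≤ f (λ • Z) ≤ λ f Z + (1 - λ) f 0`, so `f ≤ g_Z`; the choice `λ = 1` gives `g_X X ≤ f X`
and `λ = 0` gives `g_Z 0 ≤ f 0`. Each `g_Z` is monotone because the constraint `X ≤ λ • Z`
only weakens as `X` decreases, and convex because the set of feasible pairs `(X, λ)` is convex
while the objective is affine in `λ`. -/

open Set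

/-- The EReal form of convexity (where `0 * ⊤ = 0`) follows from the inequality against real
upper bounds at interior weights. -/
lemma EReal.convex_of_forall_lt {E : Type*} [AddCommMonoid E] [Module ℝ E] {g : E → EReal}
    (hbot : ∀ x, g x ≠ ⊥)
    (h : ∀ X Y : E, ∀ lam : ℝ, 0 < lam → lam < 1 → ∀ u v : ℝ, g X < u → g Y < v →
      g (lam • X + (1 - lam) • Y) ≤ ((lam * u + (1 - lam) * v : ℝ) : EReal))
    (X Y : E) (lam : ℝ) (h0 : 0 ≤ lam) (h1 : lam ≤ 1) :
    g (lam • X + (1 - lam) • Y) ≤ (lam : EReal) * g X + ((1 - lam : ℝ) : EReal) * g Y := by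
  rcases h0.eq_or_lt with rfl | h0
  · simp
  rcases h1.eq_or_lt with rfl | h1
  · simp
  have hmul_ne_bot : ∀ {c : ℝ}, 0 < c → ∀ x, (c : EReal) * g x ≠ ⊥ := fun hc x => by
    simp [EReal.mul_ne_bot, hbot x, hc.le]
  induction hX : g X using EReal.rec with
  | bot => exact absurd hX (hbot X)
  | top =>
    rw [EReal.coe_mul_top_of_pos h0, EReal.top_add_of_ne_bot (hmul_ne_bot (by linarith) Y)]
    exact le_top
  | coe x =>
  induction hY : g Y using EReal.rec with
  | bot => exact absurd hY (hbot Y)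
  | top =>
    rw [EReal.coe_mul_top_of_pos (by linarith), 
      EReal.add_top_of_ne_bot (EReal.coe_mul lam x ▸ EReal.coe_ne_bot _)]
    exact le_top
  | coe y =>
  rw [← EReal.coe_mul, ← EReal.coe_mul, ← EReal.coe_add, ← EReal.le_of_forall_lt_iff_le]
  intro w hw
  set t := lam * x + (1 - lam) * y
  have hw : t < w := EReal.coe_lt_coe_iff.1 hw
  convert h X Y lam h0 h1 (x + (w - t)) (y + (w - t))
    (by rw [hX]; exact EReal.coe_lt_coe_iff.2 (by linarith))
    (by rw [hY]; exact EReal.coe_lt_coe_iff.2 (by linarith)) using 2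
  simp only [t]
  ring

section StarMajorant

variable {E : Type*} [AddCommGroup E] [PartialOrder E] [Module ℝ E]

/-- The majorant `g_Z` of the header; `f Z` and `f 0` enter through `toReal`, so it is the
intended one only when both are finite. -/
noncomputable def starMajorant (f : E → EReal) (Z X : E) : EReal :=
  ⨅ l ∈ {l : ℝ | l ∈ Icc 0 1 ∧ X ≤ l • Z},
    ((l * (f Z).toReal + (1 - l) * (f 0).toReal : ℝ) : EReal)

variable (f : E → EReal) (Z : E)

lemma starMajorant_ne_bot (X : E) : starMajorant f Z X ≠ ⊥ := by
  refine ne_bot_of_le_ne_bot (EReal.coe_ne_bot (min (f Z).toReal (f 0).toReal)) ?_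
  refine le_iInf₂ fun l ⟨⟨hl0, hl1⟩, _⟩ => EReal.coe_le_coe_iff.2 ?_
  nlinarith [min_le_left (f Z).toReal (f 0).toReal, min_le_right (f Z).toReal (f 0).toReal]

lemma starMajorant_mono : Monotone (starMajorant f Z) :=
  fun _ _ hXY => biInf_mono fun _ ⟨hl, hY⟩ => ⟨hl, hXY.trans hY⟩

lemma starMajorant_self_le (hZ : f Z ≠ ⊤) (hbot : f Z ≠ ⊥) : starMajorant f Z Z ≤ f Z :=
  (iInf₂_le 1 ⟨⟨zero_le_one, le_rfl⟩, (one_smul ℝ Z).ge⟩).trans_eq <| by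
    simp [EReal.coe_toReal hZ hbot]

lemma starMajorant_zero_le (h0 : f 0 ≠ ⊤) (hbot : f 0 ≠ ⊥) : starMajorant f Z 0 ≤ f 0 :=
  (iInf₂_le 0 ⟨⟨le_rfl, zero_le_one⟩, (zero_smul ℝ Z).ge⟩).trans_eq <| by
    simp [EReal.coe_toReal h0 hbot]

lemma le_starMajorant (hmono : Monotone f)
    (hss : ∀ x : E, ∀ lam : ℝ, 0 ≤ lam → lam ≤ 1 →
      f (lam • x) ≤ (lam : EReal) * f x + ((1 - lam : ℝ) : EReal) * f 0)
    (hZ : f Z ≠ ⊤) (h0 : f 0 ≠ ⊤) (hbot : ∀ x, f x ≠ ⊥) (X : E) :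
    f X ≤ starMajorant f Z X := by
  refine le_iInf₂ fun l ⟨⟨hl0, hl1⟩, hX⟩ => ?_
  calc f X ≤ f (l • Z) := hmono hX
    _ ≤ (l : EReal) * f Z + ((1 - l : ℝ) : EReal) * f 0 := hss Z l hl0 hl1
    _ = _ := by
      rw [EReal.coe_add, EReal.coe_mul, EReal.coe_mul, EReal.coe_toReal hZ (hbot Z),
        EReal.coe_toReal h0 (hbot 0)]

variable [IsOrderedAddMonoid E] [PosSMulMono ℝ E]

lemma starMajorant_convex : ∀ X Y : E, ∀ lam : ℝ, 0 ≤ lam → lam ≤ 1 →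
    starMajorant f Z (lam • X + (1 - lam) • Y) ≤
      (lam : EReal) * starMajorant f Z X + ((1 - lam : ℝ) : EReal) * starMajorant f Z Y := by
  refine EReal.convex_of_forall_lt (starMajorant_ne_bot f Z) fun X Y lam h0 h1 u v hu hv => ?_
  obtain ⟨p, ⟨⟨hp0, hp1⟩, hpX⟩, hpu⟩ := by
    simpa only [starMajorant, iInf_lt_iff, exists_prop, mem_ofPred_eq, mem_Icc,
      EReal.coe_lt_coe_iff] using hu
  obtain ⟨q, ⟨⟨hq0, hq1⟩, hqY⟩, hqv⟩ := by
    simpa only [starMajorant, iInf_lt_iff, exists_prop, mem_ofPred_eq, mem_Icc,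
      EReal.coe_lt_coe_iff] using hv
  have hfeas : lam • X + (1 - lam) • Y ≤ (lam * p + (1 - lam) * q) • Z := by
    rw [add_smul, mul_smul, mul_smul]
    exact add_le_add (smul_le_smul_of_nonneg_left hpX h0.le)
      (smul_le_smul_of_nonneg_left hqY (sub_nonneg.2 h1.le))
  refine (iInf₂_le (lam * p + (1 - lam) * q) ⟨⟨by positivity, by nlinarith⟩, hfeas⟩).trans ?_
  rw [EReal.coe_le_coe_iff]
  nlinarith

end StarMajorant

/-- a monotone star-shaped functional on an ordered real vector space is
the attained pointwise minimum of a family of monotone convex functionals indexed by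
the points of its proper domain, all agreeing with it at `0` and dominating it. -/
theorem stmt_4 {E : Type*} [AddCommGroup E] [PartialOrder E] [IsOrderedAddMonoid E] [Module ℝ E] [PosSMulMono ℝ E]
    (f : E → EReal) (hmono : Monotone f)
    (hss : ∀ x : E, ∀ lam : ℝ, 0 ≤ lam → lam ≤ 1 →
      f (lam • x) ≤ (lam : EReal) * f x + ((1 - lam : ℝ) : EReal) * f 0)
    (hbot : ∀ x : E, f x ≠ ⊥) (htop : f 0 ≠ ⊤) :
    ∃ g : {Z : E // f Z ≠ ⊤} → E → EReal,
      (∀ Z, Monotone (g Z)) ∧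
      (∀ Z, ∀ X Y : E, ∀ lam : ℝ, 0 ≤ lam → lam ≤ 1 →
        g Z (lam • X + (1 - lam) • Y) ≤
          (lam : EReal) * g Z X + ((1 - lam : ℝ) : EReal) * g Z Y) ∧
      (∀ Z, ∀ x : E, g Z x ≠ ⊥) ∧
      (∀ Z, g Z 0 = f 0) ∧
      (∀ Z, ∀ X : E, f X ≤ g Z X) ∧
      (∀ X : E, f X = ⨅ Z, g Z X) ∧
      (∀ X : E, ∃ Z, f X = g Z X) := by
  set g : {Z : E // f Z ≠ ⊤} → E → EReal := fun Z => starMajorant f Z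
  have hdom : ∀ Z X, f X ≤ g Z X := fun Z => le_starMajorant f Z hmono hss Z.2 htop hbot
  have hattained : ∀ X, ∃ Z, f X = g Z X := by
    intro X
    by_cases hX : f X = ⊤
    · exact ⟨⟨0, htop⟩, le_antisymm (hdom _ X) (hX.symm ▸ le_top)⟩
    · exact ⟨⟨X, hX⟩, le_antisymm (hdom _ X) (starMajorant_self_le f X hX (hbot X))⟩
  refine ⟨g, fun Z => starMajorant_mono f Z, fun Z => starMajorant_convex f Z,
    fun Z => starMajorant_ne_bot f Z,
    fun Z => le_antisymm (starMajorant_zero_le f Z htop (hbot 0)) (hdom Z 0), hdom, ?_, hattained⟩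
  intro X
  obtain ⟨Z, hZ⟩ := hattained X
  exact le_antisymm (le_iInf fun Z => hdom Z X) ((iInf_le _ Z).trans hZ.ge)
end

section
/- Let E be a real vector space and let f : E → EReal satisfy f x ≠ ⊥ for all x, f 0 = 0, and positive homogeneity: f (α • X) = (α : EReal) * f X for every X ∈ E and every real α > 0. For Z ∈ E define f_Z⁺ : E → EReal by f_Z⁺ X := sInf { (α : EReal) * f Z | α ∈ [0,∞) and X = α • Z } (so f_Z⁺ X = ⊤ when no such α exists). Then for every Z with f Z ≠ ⊤: f_Z⁺ is positively homogeneous (f_Z⁺(α • X) = (α : EReal) * f_Z⁺ X for all real α > 0), subadditive (f_Z⁺(X + Y) ≤ f_Z⁺ X + f_Z⁺ Y for all X, Y), and f X ≤ f_Z⁺ X for all X; moreover, for every X ∈ E, f X = ⨅_{Z : f Z ≠ ⊤} f_Z⁺ X, this infimum being attained. -/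
/-!
Along the ray `ℝ≥0 • Z` the functional `f_Z⁺` is the linear function `α • Z ↦ α * f Z`, which
agrees with `f` there by positive homogeneity, and off the ray it is `⊤`. Hence it is sublinear
and dominates `f`; the infimum over `Z` is attained at `Z = X` when `f X < ⊤`, and at `Z = 0`
(whose ray misses `X ≠ 0`) when `f X = ⊤`.
-/

/-- The functional `f_Z⁺` associated to `f : E → EReal` and `Z : E`:
`f_Z⁺ X = sInf { α * f Z | α ∈ [0,∞), X = α • Z }` (in `EReal`, `sInf ∅ = ⊤`). -/
noncomputable def slicePH {E : Type*} [AddCommGroup E] [Module ℝ E]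
    (f : E → EReal) (Z : E) (X : E) : EReal :=
  sInf {v : EReal | ∃ α : ℝ, 0 ≤ α ∧ X = α • Z ∧ v = (α : EReal) * f Z}

namespace slicePH

variable {E : Type*} [AddCommGroup E] [Module ℝ E] {f : E → EReal} {Z X : E}

theorem eq_of_eq_smul (h0 : f 0 = 0) {α : ℝ} (hα : 0 ≤ α) (hX : X = α • Z) :
    slicePH f Z X = α * f Z := by
  refine le_antisymm (sInf_le ⟨α, hα, hX, rfl⟩) (le_sInf ?_)
  rintro v ⟨β, -, hXβ, rfl⟩
  rcases eq_or_ne Z 0 with rfl | hZ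
  · simp [h0]
  · rw [smul_left_injective ℝ hZ (hX.symm.trans hXβ)]

theorem eq_top_of_forall_ne_smul (h : ∀ α : ℝ, 0 ≤ α → X ≠ α • Z) : slicePH f Z X = ⊤ := by
  refine sInf_eq_top.mpr ?_
  rintro v ⟨α, hα, hX, -⟩
  exact absurd hX (h α hα)

theorem ne_bot (h0 : f 0 = 0) (hZ : f Z ≠ ⊥) (X : E) : slicePH f Z X ≠ ⊥ := by
  by_cases hray : ∃ α : ℝ, 0 ≤ α ∧ X = α • Z
  · obtain ⟨α, hα, hX⟩ := hray
    rw [eq_of_eq_smul h0 hα hX, EReal.mul_ne_bot]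
    exact ⟨.inl (EReal.coe_ne_bot α), .inr hZ, .inl (EReal.coe_ne_top α),
      .inl (EReal.coe_nonneg.mpr hα)⟩
  · rw [eq_top_of_forall_ne_smul fun α hα hX => hray ⟨α, hα, hX⟩]
    exact top_ne_bot

theorem smul (h0 : f 0 = 0) {c : ℝ} (hc : 0 < c) (X : E) :
    slicePH f Z (c • X) = c * slicePH f Z X := by
  by_cases hray : ∃ α : ℝ, 0 ≤ α ∧ X = α • Z
  · obtain ⟨α, hα, hX⟩ := hray
    rw [eq_of_eq_smul h0 hα hX, eq_of_eq_smul h0 (mul_nonneg hc.le hα) (by rw [hX, smul_smul]),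
      EReal.coe_mul, mul_assoc]
  · have hcray : ∀ β : ℝ, 0 ≤ β → c • X ≠ β • Z := by
      intro β hβ hcX
      refine hray ⟨c⁻¹ * β, mul_nonneg (inv_nonneg.mpr hc.le) hβ, ?_⟩
      rw [← smul_smul, ← hcX, inv_smul_smul₀ hc.ne']
    rw [eq_top_of_forall_ne_smul hcray, eq_top_of_forall_ne_smul fun α hα hX => hray ⟨α, hα, hX⟩,
      EReal.mul_top_of_pos (EReal.coe_pos.mpr hc)]

theorem add_le (h0 : f 0 = 0) (hZ : f Z ≠ ⊥) (X Y : E) :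
    slicePH f Z (X + Y) ≤ slicePH f Z X + slicePH f Z Y := by
  by_cases hXray : ∃ α : ℝ, 0 ≤ α ∧ X = α • Z
  · by_cases hYray : ∃ β : ℝ, 0 ≤ β ∧ Y = β • Z
    · obtain ⟨α, hα, hX⟩ := hXray
      obtain ⟨β, hβ, hY⟩ := hYray
      rw [eq_of_eq_smul h0 hα hX, eq_of_eq_smul h0 hβ hY,
        eq_of_eq_smul h0 (add_nonneg hα hβ) (by rw [hX, hY, add_smul]), EReal.coe_add,
        EReal.right_distrib_of_nonneg (EReal.coe_nonneg.mpr hα) (EReal.coe_nonneg.mpr hβ)]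
    · rw [eq_top_of_forall_ne_smul (Z := Z) (X := Y) fun β hβ hY => hYray ⟨β, hβ, hY⟩,
        EReal.add_top_of_ne_bot (ne_bot h0 hZ X)]
      exact le_top
  · rw [eq_top_of_forall_ne_smul (Z := Z) (X := X) fun α hα hX => hXray ⟨α, hα, hX⟩,
      EReal.top_add_of_ne_bot (ne_bot h0 hZ Y)]
    exact le_top

theorem apply_le (h0 : f 0 = 0) (hph : ∀ X : E, ∀ α : ℝ, 0 < α → f (α • X) = α * f X) (X : E) :
    f X ≤ slicePH f Z X := by
  refine le_sInf ?_
  rintro v ⟨α, hα, rfl, rfl⟩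
  rcases hα.eq_or_lt with rfl | hα
  · simp [h0]
  · exact (hph Z α hα).le

theorem self (h0 : f 0 = 0) (X : E) : slicePH f X X = f X := by
  rw [eq_of_eq_smul h0 zero_le_one (one_smul ℝ X).symm, EReal.coe_one, one_mul]

theorem zero_left (hX : X ≠ 0) : slicePH f 0 X = ⊤ :=
  eq_top_of_forall_ne_smul fun α _ => by rwa [smul_zero]

theorem exists_apply_eq (h0 : f 0 = 0) (X : E) : ∃ Z : E, f Z ≠ ⊤ ∧ f X = slicePH f Z X := by
  by_cases hX : f X = ⊤
  · have hX0 : X ≠ 0 := by rintro rfl; simp [h0] at hX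
    exact ⟨0, by simp [h0], by rw [hX, zero_left hX0]⟩
  · exact ⟨X, hX, (self h0 X).symm⟩

end slicePH

/-- a positively homogeneous functional with `f 0 = 0` is the attained pointwise
minimum of the sublinear (positively homogeneous and subadditive) functionals `f_Z⁺`,
`Z ∈ dom f`, each of which dominates `f`. -/
theorem stmt_5 {E : Type*} [AddCommGroup E] [Module ℝ E]
    (f : E → EReal) (hbot : ∀ x : E, f x ≠ ⊥) (h0 : f 0 = 0)
    (hph : ∀ X : E, ∀ α : ℝ, 0 < α → f (α • X) = (α : EReal) * f X) :
    (∀ Z : E, f Z ≠ ⊤ →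
      (∀ X : E, ∀ α : ℝ, 0 < α → slicePH f Z (α • X) = (α : EReal) * slicePH f Z X) ∧
      (∀ X Y : E, slicePH f Z (X + Y) ≤ slicePH f Z X + slicePH f Z Y) ∧
      (∀ X : E, f X ≤ slicePH f Z X)) ∧
    (∀ X : E,
      f X = (⨅ Z : {Z : E // f Z ≠ ⊤}, slicePH f Z.1 X) ∧
        ∃ Z : E, f Z ≠ ⊤ ∧ f X = slicePH f Z X) := by
  refine ⟨fun Z _ => ⟨fun X α hα => slicePH.smul h0 hα X, slicePH.add_le h0 (hbot Z),
    slicePH.apply_le h0 hph⟩, fun X => ?_⟩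
  obtain ⟨Z, hZ, hXZ⟩ := slicePH.exists_apply_eq h0 X
  exact ⟨le_antisymm (le_iInf fun Z => slicePH.apply_le h0 hph X) (iInf_le_of_le ⟨Z, hZ⟩ hXZ.ge),
    Z, hZ, hXZ⟩
end

section
/- Let (Ω, F, μ) be a probability space, m a sub-σ-algebra of F, and E := MeasureTheory.Lp ℝ ∞ μ the space of (a.e.-classes of) essentially bounded real random variables, with its a.e. order and its pointwise-a.e. ring structure. Let ρ : E → E be monotone (X ≤ Y a.e. implies ρ X ≤ ρ Y a.e.) and cash-subadditive: for every X ∈ E and every c ∈ E with c ≥ 0 having an m-strongly-measurable representative, ρ (X + c) ≤ ρ X + c. Then ρ is regular: for every m-measurable set A and every X ∈ E, 1_A * ρ X = 1_A * ρ (1_A * X) in E, where 1_A ∈ E denotes the class of the indicator function of A. -/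
/-!
Put `c := ‖X‖ • 1_Aᶜ`, which is nonnegative and `m`-measurable. Pointwise `X ≤ 1_A X + c` and
`1_A X ≤ X + c`, so monotonicity and cash-subadditivity give `ρ X ≤ ρ (1_A X) + c` and
`ρ (1_A X) ≤ ρ X + c`. Multiplication by `1_A` preserves both inequalities and annihilates `c`.
-/

open MeasureTheory

/-- Pointwise-a.e. multiplication on `L∞` (well defined since essentially bounded functions
are closed under products). -/
noncomputable def LinfMul {Ω : Type*} [MeasurableSpace Ω] {μ : Measure Ω}
    (f g : Lp ℝ ⊤ μ) : Lp ℝ ⊤ μ :=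
  ((Lp.memLp g).smul (r := ⊤) (Lp.memLp f)).toLp ((f : Ω → ℝ) • (g : Ω → ℝ))

theorem Lp.ae_norm_le_norm_top {Ω E : Type*} [MeasurableSpace Ω] {μ : Measure Ω}
    [NormedAddCommGroup E] (f : Lp E ⊤ μ) : ∀ᵐ ω ∂μ, ‖f ω‖ ≤ ‖f‖ := by
  simpa only [Lp.norm_def, toReal_eLpNorm (Lp.aestronglyMeasurable f)] using
    ae_le_lpNorm_exponent_top (Lp.memLp f)

section LinfMul

variable {Ω : Type*} [MeasurableSpace Ω] {μ : Measure Ω}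

theorem coeFn_LinfMul (f g : Lp ℝ ⊤ μ) : (LinfMul f g : Ω → ℝ) =ᵐ[μ] fun ω => f ω * g ω :=
  MemLp.coeFn_toLp _

theorem LinfMul_mono_right {e u v : Lp ℝ ⊤ μ} (he : 0 ≤ e) (huv : u ≤ v) :
    LinfMul e u ≤ LinfMul e v := by
  rw [← Lp.coeFn_le] at huv ⊢
  rw [← Lp.coeFn_nonneg] at he
  filter_upwards [coeFn_LinfMul e u, coeFn_LinfMul e v, he, huv] with ω hu hv heω huvω
  rw [hu, hv]
  exact mul_le_mul_of_nonneg_left huvω heω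

theorem LinfMul_add_right (e u v : Lp ℝ ⊤ μ) :
    LinfMul e (u + v) = LinfMul e u + LinfMul e v := by
  apply Lp.ext
  filter_upwards [coeFn_LinfMul e (u + v), coeFn_LinfMul e u, coeFn_LinfMul e v,
    Lp.coeFn_add u v, Lp.coeFn_add (LinfMul e u) (LinfMul e v)] with ω h h₁ h₂ hadd hadd'
  rw [h, hadd', Pi.add_apply, h₁, h₂, hadd, Pi.add_apply, mul_add]

variable {s t : Set Ω} (hs : MeasurableSet s) (hμs : μ s ≠ ⊤) (ht : MeasurableSet t)
  (hμt : μ t ≠ ⊤)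

theorem indicatorConstLp_nonneg {c : ℝ} (hc : 0 ≤ c) : 0 ≤ indicatorConstLp ⊤ hs hμs c := by
  rw [← Lp.coeFn_nonneg]
  filter_upwards [indicatorConstLp_coeFn (p := ⊤) (hs := hs) (hμs := hμs) (c := c)] with ω h
  rw [h]
  exact Set.indicator_nonneg (fun _ _ => hc) ω

theorem LinfMul_indicatorConstLp_of_disjoint (hst : Disjoint s t) (a b : ℝ) :
    LinfMul (indicatorConstLp ⊤ hs hμs a) (indicatorConstLp ⊤ ht hμt b) = 0 := by
  apply Lp.ext
  filter_upwards [coeFn_LinfMul (indicatorConstLp ⊤ hs hμs a) (indicatorConstLp ⊤ ht hμt b),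
    indicatorConstLp_coeFn (p := ⊤) (hs := hs) (hμs := hμs) (c := a),
    indicatorConstLp_coeFn (p := ⊤) (hs := ht) (hμs := hμt) (c := b),
    Lp.coeFn_zero ℝ ⊤ μ] with ω h ha hb h0
  rw [h, ha, hb, h0]
  by_cases hω : ω ∈ s
  · simp [Set.indicator_of_notMem (hst.notMem_of_mem_left hω)]
  · simp [hω]

theorem le_LinfMul_indicatorConstLp_add (hμsc : μ sᶜ ≠ ⊤) (X : Lp ℝ ⊤ μ) :
    X ≤ LinfMul (indicatorConstLp ⊤ hs hμs 1) X + indicatorConstLp ⊤ hs.compl hμsc ‖X‖ := by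
  rw [← Lp.coeFn_le]
  filter_upwards [Lp.coeFn_add (LinfMul (indicatorConstLp ⊤ hs hμs 1) X)
      (indicatorConstLp ⊤ hs.compl hμsc ‖X‖),
    coeFn_LinfMul (indicatorConstLp ⊤ hs hμs 1) X,
    indicatorConstLp_coeFn (p := ⊤) (hs := hs) (hμs := hμs) (c := (1 : ℝ)),
    indicatorConstLp_coeFn (p := ⊤) (hs := hs.compl) (hμs := hμsc) (c := ‖X‖),
    Lp.ae_norm_le_norm_top X] with ω hadd hmul he hc hX
  rw [hadd, Pi.add_apply, hmul, he, hc]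
  by_cases hω : ω ∈ s
  · simp [hω]
  · have := (abs_le.mp (hX.trans_eq' (Real.norm_eq_abs _).symm)).2
    simp only [Set.indicator_of_notMem hω, Set.indicator_of_mem (Set.mem_compl hω), zero_mul]
    linarith

theorem LinfMul_indicatorConstLp_le_add (hμsc : μ sᶜ ≠ ⊤) (X : Lp ℝ ⊤ μ) :
    LinfMul (indicatorConstLp ⊤ hs hμs 1) X ≤ X + indicatorConstLp ⊤ hs.compl hμsc ‖X‖ := by
  rw [← Lp.coeFn_le]
  filter_upwards [Lp.coeFn_add X (indicatorConstLp ⊤ hs.compl hμsc ‖X‖),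
    coeFn_LinfMul (indicatorConstLp ⊤ hs hμs 1) X,
    indicatorConstLp_coeFn (p := ⊤) (hs := hs) (hμs := hμs) (c := (1 : ℝ)),
    indicatorConstLp_coeFn (p := ⊤) (hs := hs.compl) (hμs := hμsc) (c := ‖X‖),
    Lp.ae_norm_le_norm_top X] with ω hadd hmul he hc hX
  rw [hadd, Pi.add_apply, hmul, he, hc]
  by_cases hω : ω ∈ s
  · simp [hω]
  · have := (abs_le.mp (hX.trans_eq' (Real.norm_eq_abs _).symm)).1
    simp only [Set.indicator_of_notMem hω, Set.indicator_of_mem (Set.mem_compl hω), zero_mul]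
    linarith

end LinfMul

/-- a monotone, cash-subadditive map `ρ : L∞ → L∞` is regular:
`1_A * ρ X = 1_A * ρ (1_A * X)` for every `m`-measurable set `A`. -/
theorem stmt_12 {Ω : Type*} {m mΩ : MeasurableSpace Ω} (hm : m ≤ mΩ)
    (μ : Measure Ω) [IsProbabilityMeasure μ]
    (ρ : Lp ℝ ⊤ μ → Lp ℝ ⊤ μ)
    (hmono : Monotone ρ)
    (hcs : ∀ X c : Lp ℝ ⊤ μ, 0 ≤ c → AEStronglyMeasurable[m] (c : Ω → ℝ) μ →
      ρ (X + c) ≤ ρ X + c) :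
    ∀ A : Set Ω, ∀ (hA : MeasurableSet[m] A), ∀ X : Lp ℝ ⊤ μ,
      LinfMul (indicatorConstLp ⊤ (hm A hA) (measure_ne_top μ A) (1 : ℝ)) (ρ X) =
        LinfMul (indicatorConstLp ⊤ (hm A hA) (measure_ne_top μ A) (1 : ℝ))
          (ρ (LinfMul (indicatorConstLp ⊤ (hm A hA) (measure_ne_top μ A) (1 : ℝ)) X)) := by
  intro A hA X
  set e := indicatorConstLp ⊤ (hm A hA) (measure_ne_top μ A) (1 : ℝ)
  set c := indicatorConstLp ⊤ (hm A hA).compl (measure_ne_top μ Aᶜ) ‖X‖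
  have hc_nonneg : 0 ≤ c := indicatorConstLp_nonneg _ _ (norm_nonneg X)
  have hc_meas : AEStronglyMeasurable[m] (c : Ω → ℝ) μ :=
    ((stronglyMeasurable_const : StronglyMeasurable[m] fun _ => ‖X‖).indicator
      hA.compl).aestronglyMeasurable.congr indicatorConstLp_coeFn.symm
  have hec : LinfMul e c = 0 :=
    LinfMul_indicatorConstLp_of_disjoint _ _ _ _ disjoint_compl_right _ _
  have hρ_le_of_le_add : ∀ Y Z, Y ≤ Z + c → LinfMul e (ρ Y) ≤ LinfMul e (ρ Z) := fun Y Z hYZ =>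
    calc LinfMul e (ρ Y) ≤ LinfMul e (ρ Z + c) :=
          LinfMul_mono_right (indicatorConstLp_nonneg _ _ zero_le_one)
            ((hmono hYZ).trans (hcs Z c hc_nonneg hc_meas))
      _ = LinfMul e (ρ Z) := by rw [LinfMul_add_right, hec, add_zero]
  exact le_antisymm (hρ_le_of_le_add _ _ (le_LinfMul_indicatorConstLp_add _ _ _ X))
    (hρ_le_of_le_add _ _ (LinfMul_indicatorConstLp_le_add _ _ _ X))
end

section
/- Let (Ω, F, μ) be a probability space, m a sub-σ-algebra of F, E := MeasureTheory.Lp ℝ ∞ μ with its a.e. order and pointwise-a.e. ring structure, and 1 ∈ E the class of the constant function 1. Let Γ be a nonempty index set, c₀ ∈ ℝ, and (ρ^γ)_{γ∈Γ} a family of maps ρ^γ : E → E such that each ρ^γ is: monotone; cash-subadditive (ρ^γ(X + c) ≤ ρ^γ X + c for every X ∈ E and every m-measurable c ∈ E with c ≥ 0); star-shaped (ρ^γ(λ * X) ≤ λ * ρ^γ X + (1 - λ) * ρ^γ 0 for every X ∈ E and every m-measurable λ ∈ E with 0 ≤ λ ≤ 1); and normalized by ρ^γ 0 = c₀ • 1.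 Let ρ : E → E satisfy: ρ X ≤ ρ^γ X for all X ∈ E and γ ∈ Γ, and for each X ∈ E there exists γ ∈ Γ with ρ X = ρ^γ X. Then ρ is monotone, cash-subadditive, star-shaped (all in the same sense, with ρ 0 = c₀ • 1), and regular: for every m-measurable set A and every X ∈ E, 1_A * ρ X = 1_A * ρ (1_A * X), where 1_A ∈ E is the class of the indicator of A. -/
/-!
Monotonicity, cash-subadditivity and star-shapedness pass to an attained pointwise minimum
`ρ X = ρ^γ X`: compare `ρ` with `ρ^γ` at the other argument, where only `ρ ≤ ρ^γ` is needed.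

Each `ρ^γ` is regular as a consequence of the other three properties.
For `e = 1_A` with `A ∈ m`, the cash `‖X‖ (1 - e)` is `m`-measurable, nonnegative and
dominates `(1 - e) X`, so `e ρ X ≤ e ρ (e X + ‖X‖ (1 - e)) ≤ e ρ (e X)` since `e (1 - e) = 0`;
star-shapedness with `λ = e` gives `e ρ (e X) ≤ e (e ρ X + (1 - e) ρ 0) = e ρ X`.
Multiplication by `e ≥ 0` is monotone, so regularity passes to the attained minimum as well.
-/

open MeasureTheory
open scoped ENNReal

/-- The constant function `1` as an element of `L∞`. -/
noncomputable def LinfOne {Ω : Type*} [MeasurableSpace Ω] (μ : Measure Ω) : Lp ℝ ⊤ μ :=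
  (memLp_top_const (1 : ℝ)).toLp fun _ => (1 : ℝ)

namespace MeasureTheory.Lp

variable {Ω : Type*} {mΩ : MeasurableSpace Ω} {μ : Measure Ω}

theorem ae_norm_le_norm_top {E : Type*} [NormedAddCommGroup E] (f : Lp E ∞ μ) :
    ∀ᵐ x ∂μ, ‖f x‖ ≤ ‖f‖ := by
  rw [Lp.norm_def, toReal_eLpNorm (Lp.aestronglyMeasurable f)]
  exact ae_le_lpNorm_exponent_top (Lp.memLp f)

theorem smul_nonneg {p : ℝ≥0∞} {a : ℝ} {f : Lp ℝ p μ} (ha : 0 ≤ a) (hf : 0 ≤ f) : 0 ≤ a • f := by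
  rw [← Lp.coeFn_nonneg] at hf ⊢
  filter_upwards [Lp.coeFn_smul a f, hf] with x hx hfx
  rw [hx]
  exact mul_nonneg ha hfx

end MeasureTheory.Lp

section

-- `m` comes before `mΩ` so that the `MeasurableSpace` instance found for `Lp`, `LinfOne`, ...
-- is `mΩ`, the one `μ` lives on.
variable {Ω : Type*} {m mΩ : MeasurableSpace Ω} {μ : Measure Ω}

theorem coeFn_linfMul (f g : Lp ℝ ⊤ μ) : (LinfMul f g : Ω → ℝ) =ᵐ[μ] fun x => f x * g x :=
  MemLp.coeFn_toLp _

theorem coeFn_linfOne : (LinfOne μ : Ω → ℝ) =ᵐ[μ] fun _ => 1 :=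
  MemLp.coeFn_toLp _

theorem linfMul_le_linfMul_of_nonneg_left {h f g : Lp ℝ ⊤ μ} (hh : 0 ≤ h) (hfg : f ≤ g) :
    LinfMul h f ≤ LinfMul h g := by
  rw [← Lp.coeFn_le]
  filter_upwards [coeFn_linfMul h f, coeFn_linfMul h g, (Lp.coeFn_le f g).mpr hfg,
    (Lp.coeFn_nonneg h).mpr hh] with x hhf hhg hfg hh
  rw [hhf, hhg]
  exact mul_le_mul_of_nonneg_left hfg hh

def IsLinfIndicator (e : Lp ℝ ⊤ μ) (s : Set Ω) : Prop :=
  (e : Ω → ℝ) =ᵐ[μ] s.indicator fun _ => 1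

theorem isLinfIndicator_indicatorConstLp {s : Set Ω} (hs : MeasurableSet s) (hμs : μ s ≠ ∞) :
    IsLinfIndicator (indicatorConstLp ⊤ hs hμs (1 : ℝ)) s :=
  indicatorConstLp_coeFn

namespace IsLinfIndicator

variable {s : Set Ω} {e : Lp ℝ ⊤ μ} (he : IsLinfIndicator e s)
include he

theorem nonneg : 0 ≤ e := by
  rw [← Lp.coeFn_nonneg]
  filter_upwards [he] with x hx
  rw [hx]
  exact Set.indicator_nonneg (fun _ _ => zero_le_one) x

theorem le_linfOne : e ≤ LinfOne μ := by
  rw [← Lp.coeFn_le]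
  filter_upwards [he, coeFn_linfOne (μ := μ)] with x hx h1
  rw [hx, h1]
  exact Set.indicator_le_self' (fun _ _ => zero_le_one) x

theorem le_linfMul_add_norm_smul (X : Lp ℝ ⊤ μ) :
    X ≤ LinfMul e X + ‖X‖ • (LinfOne μ - e) := by
  rw [← Lp.coeFn_le]
  filter_upwards [Lp.coeFn_add (LinfMul e X) (‖X‖ • (LinfOne μ - e)), coeFn_linfMul e X,
    Lp.coeFn_smul ‖X‖ (LinfOne μ - e), Lp.coeFn_sub (LinfOne μ) e, coeFn_linfOne (μ := μ),
    he, Lp.ae_norm_le_norm_top X] with x h1 h2 h3 h4 h5 h6 hX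
  simp only [h1, Pi.add_apply, h2, h3, Pi.smul_apply, h4, Pi.sub_apply, h5, h6, smul_eq_mul]
  by_cases hx : x ∈ s
  · simp [hx]
  · simpa [hx] using (le_abs_self _).trans hX

theorem linfMul_add_smul (Z : Lp ℝ ⊤ μ) (a : ℝ) :
    LinfMul e (Z + a • (LinfOne μ - e)) = LinfMul e Z := by
  ext1
  filter_upwards [coeFn_linfMul e (Z + a • (LinfOne μ - e)), coeFn_linfMul e Z,
    Lp.coeFn_add Z (a • (LinfOne μ - e)), Lp.coeFn_smul a (LinfOne μ - e),
    Lp.coeFn_sub (LinfOne μ) e, coeFn_linfOne (μ := μ), he] with x h1 h2 h3 h4 h5 h6 h7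
  simp only [h1, h2, h3, Pi.add_apply, h4, Pi.smul_apply, h5, Pi.sub_apply, h6, h7]
  by_cases hx : x ∈ s <;> simp [hx]

theorem linfMul_add_linfMul (Z W : Lp ℝ ⊤ μ) :
    LinfMul e (LinfMul e Z + LinfMul (LinfOne μ - e) W) = LinfMul e Z := by
  ext1
  filter_upwards [coeFn_linfMul e (LinfMul e Z + LinfMul (LinfOne μ - e) W), coeFn_linfMul e Z,
    Lp.coeFn_add (LinfMul e Z) (LinfMul (LinfOne μ - e) W), coeFn_linfMul (LinfOne μ - e) W,
    Lp.coeFn_sub (LinfOne μ) e, coeFn_linfOne (μ := μ), he] with x h1 h2 h3 h4 h5 h6 h7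
  simp only [h1, h2, h3, Pi.add_apply, h4, h5, Pi.sub_apply, h6, h7]
  by_cases hx : x ∈ s <;> simp [hx]

variable (hs : MeasurableSet[m] s)
include hs

theorem aestronglyMeasurable : AEStronglyMeasurable[m] (e : Ω → ℝ) μ :=
  ⟨s.indicator fun _ => 1, stronglyMeasurable_const.indicator hs, he⟩

theorem aestronglyMeasurable_smul_linfOne_sub (a : ℝ) :
    AEStronglyMeasurable[m] ((a • (LinfOne μ - e) : Lp ℝ ⊤ μ) : Ω → ℝ) μ := by
  refine ⟨fun x => a * (1 - s.indicator (fun _ => (1 : ℝ)) x),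
    (stronglyMeasurable_const.sub (stronglyMeasurable_const.indicator hs)).const_mul a, ?_⟩
  filter_upwards [Lp.coeFn_smul a (LinfOne μ - e), Lp.coeFn_sub (LinfOne μ) e,
    coeFn_linfOne (μ := μ), he] with x h1 h2 h3 h4
  rw [h1, Pi.smul_apply, h2, Pi.sub_apply, h3, h4, smul_eq_mul]

end IsLinfIndicator

namespace RiskMap

variable (m) in
def IsCashSubadditive (ρ : Lp ℝ ⊤ μ → Lp ℝ ⊤ μ) : Prop :=
  ∀ X c : Lp ℝ ⊤ μ, 0 ≤ c → AEStronglyMeasurable[m] (c : Ω → ℝ) μ → ρ (X + c) ≤ ρ X + c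

variable (m) in
def IsStarShaped (ρ : Lp ℝ ⊤ μ → Lp ℝ ⊤ μ) : Prop :=
  ∀ X lam : Lp ℝ ⊤ μ, 0 ≤ lam → lam ≤ LinfOne μ → AEStronglyMeasurable[m] (lam : Ω → ℝ) μ →
    ρ (LinfMul lam X) ≤ LinfMul lam (ρ X) + LinfMul (LinfOne μ - lam) (ρ 0)

variable (m) in
def IsRegular (ρ : Lp ℝ ⊤ μ → Lp ℝ ⊤ μ) : Prop :=
  ∀ (A : Set Ω) (e : Lp ℝ ⊤ μ), MeasurableSet[m] A → IsLinfIndicator e A →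
    ∀ X, LinfMul e (ρ X) = LinfMul e (ρ (LinfMul e X))

theorem IsStarShaped.isRegular {ρ : Lp ℝ ⊤ μ → Lp ℝ ⊤ μ} (hss : IsStarShaped m ρ)
    (hmono : Monotone ρ) (hcs : IsCashSubadditive m ρ) : IsRegular m ρ := by
  intro A e hA he X
  have hcash : 0 ≤ ‖X‖ • (LinfOne μ - e) :=
    Lp.smul_nonneg (norm_nonneg X) (sub_nonneg.2 he.le_linfOne)
  refine le_antisymm ?_ ?_
  · calc LinfMul e (ρ X) ≤ LinfMul e (ρ (LinfMul e X) + ‖X‖ • (LinfOne μ - e)) :=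
          linfMul_le_linfMul_of_nonneg_left he.nonneg <|
            (hmono (he.le_linfMul_add_norm_smul X)).trans
              (hcs _ _ hcash (he.aestronglyMeasurable_smul_linfOne_sub hA _))
      _ = LinfMul e (ρ (LinfMul e X)) := he.linfMul_add_smul _ _
  · calc LinfMul e (ρ (LinfMul e X))
        ≤ LinfMul e (LinfMul e (ρ X) + LinfMul (LinfOne μ - e) (ρ 0)) :=
          linfMul_le_linfMul_of_nonneg_left he.nonneg <|
            hss X e he.nonneg he.le_linfOne (he.aestronglyMeasurable hA)
      _ = LinfMul e (ρ X) := he.linfMul_add_linfMul _ _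

end RiskMap

end

structure IsAttainedMin {Γ α β : Type*} [LE β] (ρ' : Γ → α → β) (ρ : α → β) : Prop where
  le : ∀ x γ, ρ x ≤ ρ' γ x
  exists_eq : ∀ x, ∃ γ, ρ x = ρ' γ x

namespace IsAttainedMin

theorem monotone {Γ α β : Type*} [Preorder α] [Preorder β] {ρ' : Γ → α → β} {ρ : α → β}
    (h : IsAttainedMin ρ' ρ) (hmono : ∀ γ, Monotone (ρ' γ)) : Monotone ρ := by
  intro x y hxy
  obtain ⟨γ, hγ⟩ := h.exists_eq y
  rw [hγ]
  exact (h.le x γ).trans (hmono γ hxy)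

variable {Ω Γ : Type*} {m mΩ : MeasurableSpace Ω} {μ : Measure Ω}
  {ρ' : Γ → Lp ℝ ⊤ μ → Lp ℝ ⊤ μ} {ρ : Lp ℝ ⊤ μ → Lp ℝ ⊤ μ}

theorem isCashSubadditive (h : IsAttainedMin ρ' ρ)
    (hcs : ∀ γ, RiskMap.IsCashSubadditive m (ρ' γ)) : RiskMap.IsCashSubadditive m ρ := by
  intro X c hc hcm
  obtain ⟨γ, hγ⟩ := h.exists_eq X
  rw [hγ]
  exact (h.le _ γ).trans (hcs γ X c hc hcm)

theorem isStarShaped (h : IsAttainedMin ρ' ρ) (hss : ∀ γ, RiskMap.IsStarShaped m (ρ' γ))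
    (h0 : ∀ γ, ρ' γ 0 = ρ 0) : RiskMap.IsStarShaped m ρ := by
  intro X lam hlam0 hlam1 hlamm
  obtain ⟨γ, hγ⟩ := h.exists_eq X
  rw [hγ, ← h0 γ]
  exact (h.le _ γ).trans (hss γ X lam hlam0 hlam1 hlamm)

theorem linfMul_le_linfMul (h : IsAttainedMin ρ' ρ) {e X Y : Lp ℝ ⊤ μ} (he : 0 ≤ e)
    (hXY : ∀ γ, LinfMul e (ρ' γ X) = LinfMul e (ρ' γ Y)) :
    LinfMul e (ρ X) ≤ LinfMul e (ρ Y) := by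
  obtain ⟨γ, hγ⟩ := h.exists_eq Y
  calc LinfMul e (ρ X) ≤ LinfMul e (ρ' γ X) := linfMul_le_linfMul_of_nonneg_left he (h.le X γ)
    _ = LinfMul e (ρ Y) := by rw [hXY γ, hγ]

theorem isRegular (h : IsAttainedMin ρ' ρ) (hreg : ∀ γ, RiskMap.IsRegular m (ρ' γ)) :
    RiskMap.IsRegular m ρ := fun A e hA he X =>
  le_antisymm (h.linfMul_le_linfMul he.nonneg fun γ => hreg γ A e hA he X)
    (h.linfMul_le_linfMul he.nonneg fun γ => (hreg γ A e hA he X).symm)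

end IsAttainedMin

theorem stmt_13_general {Ω : Type*} {m mΩ : MeasurableSpace Ω} (hm : m ≤ mΩ)
    (μ : Measure Ω) [IsProbabilityMeasure μ]
    {Γ : Type*} (c₀ : ℝ)
    (ρ' : Γ → Lp ℝ ⊤ μ → Lp ℝ ⊤ μ)
    (hmono : ∀ γ : Γ, Monotone (ρ' γ))
    (hcs : ∀ γ : Γ, ∀ X c : Lp ℝ ⊤ μ, 0 ≤ c → AEStronglyMeasurable[m] (c : Ω → ℝ) μ →
      ρ' γ (X + c) ≤ ρ' γ X + c)
    (hss : ∀ γ : Γ, ∀ X lam : Lp ℝ ⊤ μ, 0 ≤ lam → lam ≤ LinfOne μ →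
      AEStronglyMeasurable[m] (lam : Ω → ℝ) μ →
      ρ' γ (LinfMul lam X) ≤
        LinfMul lam (ρ' γ X) + LinfMul (LinfOne μ - lam) (ρ' γ 0))
    (hnorm : ∀ γ : Γ, ρ' γ 0 = c₀ • LinfOne μ)
    (ρ : Lp ℝ ⊤ μ → Lp ℝ ⊤ μ)
    (hmin : ∀ X : Lp ℝ ⊤ μ, ∀ γ : Γ, ρ X ≤ ρ' γ X)
    (hatt : ∀ X : Lp ℝ ⊤ μ, ∃ γ : Γ, ρ X = ρ' γ X) :
    Monotone ρ ∧
      (∀ X c : Lp ℝ ⊤ μ, 0 ≤ c → AEStronglyMeasurable[m] (c : Ω → ℝ) μ →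
        ρ (X + c) ≤ ρ X + c) ∧
      (∀ X lam : Lp ℝ ⊤ μ, 0 ≤ lam → lam ≤ LinfOne μ →
        AEStronglyMeasurable[m] (lam : Ω → ℝ) μ →
        ρ (LinfMul lam X) ≤ LinfMul lam (ρ X) + LinfMul (LinfOne μ - lam) (ρ 0)) ∧
      ρ 0 = c₀ • LinfOne μ ∧
      (∀ A : Set Ω, ∀ (hA : MeasurableSet[m] A), ∀ X : Lp ℝ ⊤ μ,
        LinfMul (indicatorConstLp ⊤ (hm A hA) (measure_ne_top μ A) (1 : ℝ)) (ρ X) =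
          LinfMul (indicatorConstLp ⊤ (hm A hA) (measure_ne_top μ A) (1 : ℝ))
            (ρ (LinfMul (indicatorConstLp ⊤ (hm A hA) (measure_ne_top μ A) (1 : ℝ)) X))) := by
  have h : IsAttainedMin ρ' ρ := ⟨hmin, hatt⟩
  have hρ0 : ρ 0 = c₀ • LinfOne μ := by
    obtain ⟨γ, hγ⟩ := hatt 0
    rw [hγ, hnorm γ]
  have hreg : RiskMap.IsRegular m ρ :=
    h.isRegular fun γ => RiskMap.IsStarShaped.isRegular (hss γ) (hmono γ) (hcs γ)
  exact ⟨h.monotone hmono, h.isCashSubadditive hcs,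
    h.isStarShaped hss fun γ => (hnorm γ).trans hρ0.symm, hρ0,
    fun A hA => hreg A _ hA (isLinfIndicator_indicatorConstLp (hm A hA) (measure_ne_top μ A))⟩

/-- an attained pointwise minimum of monotone, cash-subadditive, star-shaped
dynamic risk measures (all normalized at `c₀ • 1`) is monotone, cash-subadditive, star-shaped,
normalized at `c₀ • 1`, and regular. -/
theorem stmt_13 {Ω : Type*} {m mΩ : MeasurableSpace Ω} (hm : m ≤ mΩ)
    (μ : Measure Ω) [IsProbabilityMeasure μ]
    {Γ : Type*} [Nonempty Γ] (c₀ : ℝ)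
    (ρ' : Γ → Lp ℝ ⊤ μ → Lp ℝ ⊤ μ)
    (hmono : ∀ γ : Γ, Monotone (ρ' γ))
    (hcs : ∀ γ : Γ, ∀ X c : Lp ℝ ⊤ μ, 0 ≤ c → AEStronglyMeasurable[m] (c : Ω → ℝ) μ →
      ρ' γ (X + c) ≤ ρ' γ X + c)
    (hss : ∀ γ : Γ, ∀ X lam : Lp ℝ ⊤ μ, 0 ≤ lam → lam ≤ LinfOne μ →
      AEStronglyMeasurable[m] (lam : Ω → ℝ) μ →
      ρ' γ (LinfMul lam X) ≤
        LinfMul lam (ρ' γ X) + LinfMul (LinfOne μ - lam) (ρ' γ 0))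
    (hnorm : ∀ γ : Γ, ρ' γ 0 = c₀ • LinfOne μ)
    (ρ : Lp ℝ ⊤ μ → Lp ℝ ⊤ μ)
    (hmin : ∀ X : Lp ℝ ⊤ μ, ∀ γ : Γ, ρ X ≤ ρ' γ X)
    (hatt : ∀ X : Lp ℝ ⊤ μ, ∃ γ : Γ, ρ X = ρ' γ X) :
    Monotone ρ ∧
      (∀ X c : Lp ℝ ⊤ μ, 0 ≤ c → AEStronglyMeasurable[m] (c : Ω → ℝ) μ →
        ρ (X + c) ≤ ρ X + c) ∧
      (∀ X lam : Lp ℝ ⊤ μ, 0 ≤ lam → lam ≤ LinfOne μ →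
        AEStronglyMeasurable[m] (lam : Ω → ℝ) μ →
        ρ (LinfMul lam X) ≤ LinfMul lam (ρ X) + LinfMul (LinfOne μ - lam) (ρ 0)) ∧
      ρ 0 = c₀ • LinfOne μ ∧
      (∀ A : Set Ω, ∀ (hA : MeasurableSet[m] A), ∀ X : Lp ℝ ⊤ μ,
        LinfMul (indicatorConstLp ⊤ (hm A hA) (measure_ne_top μ A) (1 : ℝ)) (ρ X) =
          LinfMul (indicatorConstLp ⊤ (hm A hA) (measure_ne_top μ A) (1 : ℝ))
            (ρ (LinfMul (indicatorConstLp ⊤ (hm A hA) (measure_ne_top μ A) (1 : ℝ)) X))) :=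
  stmt_13_general hm μ c₀ ρ' hmono hcs hss hnorm ρ hmin hatt
end

section
/- Let f : ℝ → ℝ be convex on all of ℝ (ConvexOn ℝ Set.univ f). If f is neither nondecreasing nor nonincreasing (¬ Monotone f and ¬ Antitone f), then: (a) f is coercive, i.e. f tends to +∞ along the cocompact filter of ℝ (Tendsto f (cocompact ℝ) atTop); (b) f attains a global minimum, i.e. there exists x* ∈ ℝ with f x* ≤ f x for all x ∈ ℝ; and (c) the set M := {x ∈ ℝ | ∀ y, f x ≤ f y} of global minimizers is nonempty and compact. -/
/-!
Slopes of chords of a convex function are monotone, so a chord on which `f` increases bounds `f`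
from below near `+∞` by an affine function of positive slope, and a chord on which `f` decreases
does the same near `-∞`. Hence `f` is coercive; being continuous it attains its minimum, and the
set of minimizers is the sublevel set at the minimum value, which is compact by coercivity.
-/

open Filter Set

namespace ConvexOn

variable {f : ℝ → ℝ} {a b : ℝ}

lemma tendsto_atTop_atTop_of_lt (hf : ConvexOn ℝ univ f) (hab : a < b) (hfab : f a < f b) :
    Tendsto f atTop atTop := by
  have hslope : 0 < (f b - f a) / (b - a) := div_pos (sub_pos.2 hfab) (sub_pos.2 hab)
  have hchord : ∀ x, b < x → f b + (f b - f a) / (b - a) * (x - b) ≤ f x := fun x hbx => by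
    have := hf.slope_mono_adjacent (mem_univ a) (mem_univ x) hab hbx
    rw [le_div_iff₀ (sub_pos.2 hbx)] at this
    linarith
  refine tendsto_atTop_mono' _ ?_ <| tendsto_atTop_add_const_left _ (f b) <|
    (tendsto_atTop_add_const_right _ (-b) tendsto_id).const_mul_atTop hslope
  filter_upwards [eventually_gt_atTop b] with x hbx
  simpa [sub_eq_add_neg] using hchord x hbx

lemma tendsto_atBot_atTop_of_lt (hf : ConvexOn ℝ univ f) (hab : a < b) (hfba : f b < f a) :
    Tendsto f atBot atTop := by
  have hneg : ConvexOn ℝ univ (fun x => f (-x)) := by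
    simpa [Function.comp_def] using hf.comp_affineMap (-AffineMap.id ℝ ℝ)
  have := (hneg.tendsto_atTop_atTop_of_lt (neg_lt_neg hab) (by simpa using hfba)).comp
    tendsto_neg_atBot_atTop
  simpa [Function.comp_def] using this

lemma tendsto_cocompact_atTop (hf : ConvexOn ℝ univ f) (hmono : ¬ Monotone f)
    (hanti : ¬ Antitone f) : Tendsto f (cocompact ℝ) atTop := by
  simp only [Monotone, Antitone, not_forall, not_le, exists_prop] at hmono hanti
  obtain ⟨a, b, hab, hfba⟩ := hmono
  obtain ⟨c, d, hcd, hfcd⟩ := hanti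
  rw [cocompact_eq_atBot_atTop, tendsto_sup]
  exact ⟨hf.tendsto_atBot_atTop_of_lt (hab.lt_of_ne (ne_of_apply_ne f hfba.ne')) hfba,
    hf.tendsto_atTop_atTop_of_lt (hcd.lt_of_ne (ne_of_apply_ne f hfcd.ne)) hfcd⟩

end ConvexOn

lemma Continuous.isCompact_preimage_Iic {X α : Type*} [TopologicalSpace X] [LinearOrder α]
    [NoMaxOrder α] [TopologicalSpace α] [ClosedIicTopology α] {f : X → α} (hf : Continuous f)
    (hlim : Tendsto f (cocompact X) atTop) (c : α) : IsCompact (f ⁻¹' Iic c) := by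
  obtain ⟨K, hK, hsub⟩ := mem_cocompact'.1 (hlim.eventually_gt_atTop c)
  exact hK.of_isClosed_subset (isClosed_Iic.preimage hf) fun x hx => hsub (by simpa using hx)

/-- a convex function `f : ℝ → ℝ` that is neither nondecreasing nor
nonincreasing is coercive, attains a global minimum, and its set of global minimizers
is nonempty and compact. -/
theorem stmt_17 (f : ℝ → ℝ) (hconv : ConvexOn ℝ Set.univ f)
    (hnm : ¬ Monotone f) (hna : ¬ Antitone f) :
    Tendsto f (cocompact ℝ) atTop ∧
      (∃ xstar : ℝ, ∀ x : ℝ, f xstar ≤ f x) ∧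
      ({x : ℝ | ∀ y : ℝ, f x ≤ f y}.Nonempty ∧ IsCompact {x : ℝ | ∀ y : ℝ, f x ≤ f y}) := by
  have hcoer := hconv.tendsto_cocompact_atTop hnm hna
  have hcont : Continuous f := continuousOn_univ.1 (hconv.continuousOn isOpen_univ)
  obtain ⟨xstar, hxstar⟩ := hcont.exists_forall_le hcoer
  have hmin : {x | ∀ y, f x ≤ f y} = f ⁻¹' Iic (f xstar) :=
    Set.ext fun x => ⟨fun hx => hx xstar, fun hx y => (hx : f x ≤ f xstar).trans (hxstar y)⟩
  exact ⟨hcoer, ⟨xstar, hxstar⟩, ⟨xstar, hxstar⟩, hmin ▸ hcont.isCompact_preimage_Iic hcoer _⟩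
end
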